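/- arXiv:2602.06651 — 5 statements merged into one kernel-verified Lean document; each statement's English description precedes it below -/
import Mathlib

section
/- In an ILO setting (X,d,∘), the operation ∘ is associative if and only if d(y,z)∘d(x,y) = d(x,z) for all x,y,z. -/
theorem ilo_assoc_iff {X : Type*} (d c : X → X → X)
    (hi : ∀ x z, d (c x z) x = z) (hii : ∀ x z, c x (d z x) = z) :
    (∀ x y z, c (c x y) z = c x (c y z)) ↔ (∀ x y z, c (d y z) (d x y) = d x z) := by
  constructor
  · intro ha x y z
    have h1 : c z (c (d y z) (d x y)) = x := by rw [← ha, hii, hii]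
    calc c (d y z) (d x y) = d (c z (c (d y z) (d x y))) z := (hi z _).symm
    _ = d x z := by rw [h1]
  · intro H x y z
    have h1 : d (c (c x y) z) x = c y z := by
      have h := H (c (c x y) z) (c x y) x
      rw [hi, hi] at h
      exact h.symm
    calc c (c x y) z = c x (d (c (c x y) z) x) := (hii x _).symm
    _ = c x (c y z) := by rw [h1]
end

section
/- In an ILO setting (X,d,∘), if d(y,z)∘d(x,y) = d(x,z) holds for all x,y,z, then d(d(x,z), d(y,z)) = d(x,y) for all x,y,z. -/
theorem ilo_two_implies_three {X : Type*} (d c : X → X → X)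
    (hi : ∀ x z, d (c x z) x = z) (hii : ∀ x z, c x (d z x) = z)
    (h2 : ∀ x y z, c (d y z) (d x y) = d x z) :
    ∀ x y z, d (d x z) (d y z) = d x y := by
  intro x y z
  rw [← h2 x y z, hi]
end

section
/- In an ILO setting (X,d,∘), if d(d(x,z), d(y,z)) = d(x,y) holds for all x,y,z, then d(x,y)∘t = d(x∘t, y) for all x,y,t. -/
theorem ilo_three_implies_four {X : Type*} (d c : X → X → X)
    (hi : ∀ x z, d (c x z) x = z) (hii : ∀ x z, c x (d z x) = z)
    (h3 : ∀ x y z, d (d x z) (d y z) = d x y) :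
    ∀ x y t, c (d x y) t = d (c x t) y := by
  intro x y t
  have key : d (d (c x t) y) (d x y) = t := by rw [h3, hi]
  calc c (d x y) t = c (d x y) (d (d (c x t) y) (d x y)) := by rw [key]
    _ = d (c x t) y := hii _ _
end

section
/- In an ILO setting (X,d,∘), if d(x,y)∘t = d(x∘t, y) for all x,y,t, then ∘ is associative. -/
theorem ilo_four_implies_assoc {X : Type*} (d c : X → X → X)
    (hi : ∀ x z, d (c x z) x = z) (hii : ∀ x z, c x (d z x) = z)
    (h4 : ∀ x y t, c (d x y) t = d (c x t) y) :
    ∀ x y z, c (c x y) z = c x (c y z) := by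
  intro x y z
  have h := h4 (c x y) x z
  rw [hi] at h
  rw [h, hii]
end

section
/- In an ILO setting (X,d,∘), the operation ∘ is commutative if and only if d(y, d(y,x)) = x for all x,y. -/
theorem ilo_comm_iff_three {X : Type*} (d c : X → X → X)
    (hi : ∀ x z, d (c x z) x = z) (hii : ∀ x z, c x (d z x) = z) :
    (∀ x y, c x y = c y x) ↔ (∀ x y, d y (d y x) = x) := by
  constructor
  · intro hc x y
    have h1 : c (d y x) x = y := by rw [hc]; exact hii x y
    calc d y (d y x) = d (c (d y x) x) (d y x) := by rw [h1]
      _ = x := hi (d y x) x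
  · intro h x y
    have A : d (c x y) y = x := by
      have := h x (c x y)
      rwa [hi x y] at this
    calc c x y = c y (d (c x y) y) := (hii y (c x y)).symm
      _ = c y x := by rw [A]
end
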